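/- Let e₁ = (1,0,0), e₂ = (0,1,0), e₃ = (0,0,1), and consider the degree-one (band-limited) susceptibilities Q(y) = y₁ and Q̄(y) = y₃ on S, with dipole directions d = e₃ and d̄ = e₁ respectively. Then V[Q,d](x) = V[Q̄,d̄](x) for every x ∈ ℝ³ with |x| ≠ 1; indeed the residual magnetization m_{Q,d}(y) − m_{Q̄,d̄}(y) = y₃ e₁ − y₁ e₃ = −(y × e₂) is silent. Hence band-limited susceptibilities with two non-parallel dipole directions d ≠ ±d̄ can be equivalent from outside. -/

import Mathlib

open MeasureTheory
open scoped RealInnerProductSpace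

noncomputable section

abbrev E3 := EuclideanSpace ℝ (Fin 3)

/-- The unit sphere `S = {x ∈ ℝ³ : |x| = 1}`. -/
def sphS : Set E3 := Metric.sphere 0 1

/-- The magnetic potential generated by a magnetization `m` on the unit sphere. -/
def V (m : E3 → E3) (x : E3) : ℝ :=
  (4 * Real.pi)⁻¹ * ∫ y in sphS, ⟪m y, (‖x - y‖ ^ 3)⁻¹ • (x - y)⟫ ∂μH[2]

/-- Dipole-induced magnetization with susceptibility `Q` and dipole direction `d`. -/
def mQd (Q : E3 → ℝ) (d : E3) (x : E3) : E3 := Q x • ((3 * ⟪x, d⟫) • x - d)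

/-- Cross product on `ℝ³`. -/
def cross3 (a b : E3) : E3 :=
  (EuclideanSpace.equiv (Fin 3) ℝ).symm
    ![a 1 * b 2 - a 2 * b 1, a 2 * b 0 - a 0 * b 2, a 0 * b 1 - a 1 * b 0]

/-! The residual magnetization `r y = -(y × a)` satisfies `⟪r y, x - y⟫ = ⟪x × a, y⟫`, so its
potential at `x` is a multiple of `∫_S ‖x - y‖⁻³ ⟪c, y⟫ dσ(y)` with `c = x × a ⊥ x`. The reflection
in the hyperplane `c^⊥` fixes `x` and `S`, preserves Hausdorff measure and changes the sign of this
integrand, so the integral vanishes. Off the sphere the integrands are bounded, and `σ(S) < ∞`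
(the sphere is a Lipschitz image of a square in spherical coordinates), so the potentials of the two
magnetizations differ exactly by the potential of `r`. -/

open Metric Real

def sphericalCoords (p : Fin 2 → ℝ) : E3 :=
  (EuclideanSpace.equiv (Fin 3) ℝ).symm ![sin (p 0) * cos (p 1), sin (p 0) * sin (p 1), cos (p 0)]

theorem contDiff_sphericalCoords : ContDiff ℝ 1 sphericalCoords :=
  (EuclideanSpace.equiv (Fin 3) ℝ).symm.contDiff.comp <| contDiff_pi.2 fun i => by
    fin_cases i <;> simp only [Fin.zero_eta, Fin.mk_one, Fin.reduceFinMk, Matrix.cons_val] <;>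
      fun_prop

theorem norm_sq_eq_sum_three (v : E3) : ‖v‖ ^ 2 = v 0 ^ 2 + v 1 ^ 2 + v 2 ^ 2 := by
  simp [EuclideanSpace.norm_sq_eq, Fin.sum_univ_three]

theorem inner_eq_sum_three (a b : E3) : ⟪a, b⟫ = a 0 * b 0 + a 1 * b 1 + a 2 * b 2 := by
  simp [PiLp.inner_apply, Fin.sum_univ_three, mul_comm]

theorem sphere_subset_image_sphericalCoords :
    sphere (0 : E3) 1 ⊆ sphericalCoords '' Set.univ.pi fun _ => Set.Icc (-π) π := by
  intro v hv
  have hsum : v 0 ^ 2 + v 1 ^ 2 + v 2 ^ 2 = 1 := by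
    rw [← norm_sq_eq_sum_three, mem_sphere_zero_iff_norm.mp hv, one_pow]
  set z : ℂ := ⟨v 0, v 1⟩
  have hsin : sin (arccos (v 2)) = ‖z‖ := by
    rw [sin_arccos, Complex.norm_def, Complex.normSq_mk]
    congr 1
    linarith
  refine ⟨![arccos (v 2), z.arg], fun i _ => ?_, ?_⟩
  · fin_cases i
    · show arccos (v 2) ∈ Set.Icc (-π) π
      exact ⟨by linarith [arccos_nonneg (v 2), pi_pos], arccos_le_pi _⟩
    · show z.arg ∈ Set.Icc (-π) π
      exact ⟨(Complex.neg_pi_lt_arg z).le, Complex.arg_le_pi z⟩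
  · ext i
    fin_cases i
    · simp [sphericalCoords, hsin, Complex.norm_mul_cos_arg, z]
    · simp [sphericalCoords, hsin, Complex.norm_mul_sin_arg, z]
    · show cos (arccos (v 2)) = v 2
      exact cos_arccos (by nlinarith) (by nlinarith)

theorem hausdorffMeasure_sphere_lt_top : μH[2] (sphere (0 : E3) 1) < ⊤ := by
  set B : Set (Fin 2 → ℝ) := Set.univ.pi fun _ => Set.Icc (-π) π
  have hB : IsCompact B := isCompact_univ_pi fun _ => isCompact_Icc
  obtain ⟨K, hK⟩ := contDiff_sphericalCoords.locallyLipschitz.locallyLipschitzOn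
    |>.exists_lipschitzOnWith_of_compact hB
  have hvol : (μH[2] : Measure (Fin 2 → ℝ)) = volume := by
    simpa using hausdorffMeasure_pi_real (ι := Fin 2)
  calc μH[2] (sphere (0 : E3) 1) ≤ μH[2] (sphericalCoords '' B) :=
        measure_mono sphere_subset_image_sphericalCoords
    _ ≤ (K : ENNReal) ^ (2 : ℝ) * μH[2] B := hK.hausdorffMeasure_image_le (by norm_num)
    _ < ⊤ := by
        rw [hvol]
        exact ENNReal.mul_lt_top (by simp) hB.measure_lt_top

theorem integral_sphere_mul_inner_eq_zero_of_inner_eq_zero {E : Type*} [NormedAddCommGroup E]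
    [InnerProductSpace ℝ E] [MeasurableSpace E] [BorelSpace E] (d r : ℝ) (φ : ℝ → ℝ) {x c : E}
    (hc : ⟪c, x⟫ = 0) : ∫ y in sphere (0 : E) r, φ ‖x - y‖ * ⟪c, y⟫ ∂μH[d] = 0 := by
  set R := (ℝ ∙ c)ᗮ.reflection
  have hRx : R x = x := Submodule.reflection_mem_subspace_eq_self
    (Submodule.mem_orthogonal_singleton_iff_inner_right.mpr hc)
  have hRc : R c = -c := Submodule.reflection_mem_subspace_orthogonalComplement_eq_neg
    ((ℝ ∙ c).le_orthogonal_orthogonal (Submodule.mem_span_singleton_self c))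
  have hodd : ∀ y, φ ‖x - R y‖ * ⟪c, R y⟫ = -(φ ‖x - y‖ * ⟪c, y⟫) := fun y => by
    rw [← R.norm_map (x - R y), map_sub, hRx, Submodule.reflection_reflection,
      ← R.inner_map_map c (R y), hRc, Submodule.reflection_reflection, inner_neg_left, mul_neg]
  have hR : MeasurePreserving R (μH[d].restrict (sphere 0 r)) (μH[d].restrict (sphere 0 r)) := by
    have h := (R.toIsometryEquiv.measurePreserving_hausdorffMeasure d).restrict_preimage
      (s := sphere 0 r) isClosed_sphere.measurableSet
    rwa [show R.toIsometryEquiv ⁻¹' sphere 0 r = sphere 0 r by ext; simp] at h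
  have h := hR.integral_comp R.toHomeomorph.measurableEmbedding fun y => φ ‖x - y‖ * ⟪c, y⟫
  simp only [hodd, integral_neg] at h
  linarith

theorem integral_add_eq_of_integral_eq_zero {α G : Type*} [MeasurableSpace α] {μ : Measure α}
    [NormedAddCommGroup G] [NormedSpace ℝ G] {f g : α → G} (hg : Integrable g μ)
    (hg₀ : ∫ a, g a ∂μ = 0) : ∫ a, f a + g a ∂μ = ∫ a, f a ∂μ := by
  by_cases hf : Integrable f μ
  · rw [integral_add hf hg, hg₀, add_zero]
  · rw [integral_undef hf, integral_undef ((integrable_add_iff_integrable_left' hg).not.mpr hf)]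

theorem inner_cross3_self_left (a b : E3) : ⟪cross3 a b, a⟫ = 0 := by
  simp only [cross3, Fin.isValue, PiLp.continuousLinearEquiv_symm_apply, inner_eq_sum_three,
    Matrix.cons_val_zero, Matrix.cons_val_one, Matrix.cons_val]
  ring

theorem inner_neg_cross3_sub (a x y : E3) : ⟪-cross3 y a, x - y⟫ = ⟪cross3 x a, y⟫ := by
  simp only [cross3, Fin.isValue, PiLp.continuousLinearEquiv_symm_apply, inner_neg_left,
    inner_eq_sum_three, Matrix.cons_val_zero, PiLp.sub_apply, Matrix.cons_val_one, Matrix.cons_val]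
  ring

theorem continuous_cross3_left (a : E3) : Continuous fun y => cross3 y a := by
  unfold cross3
  fun_prop

theorem V_neg_cross3_eq_zero (a x : E3) : V (fun y => -cross3 y a) x = 0 := by
  have h := integral_sphere_mul_inner_eq_zero_of_inner_eq_zero 2 1 (fun t => (t ^ 3)⁻¹)
    (inner_cross3_self_left x a)
  simp only [V, real_inner_smul_right, inner_neg_cross3_sub, sphS, h, mul_zero]

theorem continuousOn_potential_integrand {m : E3 → E3} (hm : Continuous m) {x : E3}
    (hx : ‖x‖ ≠ 1) : ContinuousOn (fun y => ⟪m y, (‖x - y‖ ^ 3)⁻¹ • (x - y)⟫) sphS := by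
  have hxy : ∀ y ∈ sphS, ‖x - y‖ ^ 3 ≠ 0 := fun y hy => by
    have : x ≠ y := fun h => hx (h ▸ mem_sphere_zero_iff_norm.mp hy)
    positivity [sub_ne_zero.mpr this]
  fun_prop (disch := assumption)

theorem V_eq_of_sub_eq_neg_cross3 {m₁ m₂ : E3 → E3} (a : E3) (h : ∀ y, m₁ y - m₂ y = -cross3 y a)
    {x : E3} (hx : ‖x‖ ≠ 1) : V m₁ x = V m₂ x := by
  have hint : IntegrableOn (fun y => ⟪-cross3 y a, (‖x - y‖ ^ 3)⁻¹ • (x - y)⟫) sphS μH[2] :=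
    (continuousOn_potential_integrand (continuous_cross3_left a).neg hx)
      |>.integrableOn_of_subset_isCompact (isCompact_sphere 0 1) isClosed_sphere.measurableSet
        subset_rfl hausdorffMeasure_sphere_lt_top.ne
  have hsplit : ∀ y, ⟪m₁ y, (‖x - y‖ ^ 3)⁻¹ • (x - y)⟫ =
      ⟪m₂ y, (‖x - y‖ ^ 3)⁻¹ • (x - y)⟫ + ⟪-cross3 y a, (‖x - y‖ ^ 3)⁻¹ • (x - y)⟫ := fun y => by
    rw [← h, inner_sub_left, add_sub_cancel]
  rw [V, V, funext hsplit, integral_add_eq_of_integral_eq_zero hint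
    (by simpa [V, pi_ne_zero] using V_neg_cross3_eq_zero a x)]

/-- **A band-limited example of non-uniqueness of the dipole direction.** The degree-one
susceptibilities `Q(y) = y₁` with direction `e₃` and `Q̄(y) = y₃` with direction `e₁`
produce the same potential off the unit sphere: their residual magnetization is
`y₃e₁ − y₁e₃ = −(y × e₂)`, which is silent. -/
theorem bandlimited_nonuniqueness_example
    (e₁ e₂ e₃ : E3)
    (he₁ : e₁ = EuclideanSpace.single 0 1) (he₂ : e₂ = EuclideanSpace.single 1 1)
    (he₃ : e₃ = EuclideanSpace.single 2 1)
    (Q Qbar : E3 → ℝ) (hQ : ∀ y : E3, Q y = y 0) (hQbar : ∀ y : E3, Qbar y = y 2) :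
    (∀ y : E3, mQd Q e₃ y - mQd Qbar e₁ y = y 2 • e₁ - y 0 • e₃) ∧
    (∀ y : E3, y 2 • e₁ - y 0 • e₃ = -(cross3 y e₂)) ∧
    (∀ x : E3, ‖x‖ ≠ 1 → V (mQd Q e₃) x = V (mQd Qbar e₁) x) := by
  subst he₁ he₂ he₃
  have hres : ∀ y : E3, mQd Q (EuclideanSpace.single 2 1) y - mQd Qbar (EuclideanSpace.single 0 1) y
      = y 2 • EuclideanSpace.single 0 1 - y 0 • EuclideanSpace.single 2 1 := fun y => by
    simp only [mQd, hQ, hQbar, EuclideanSpace.inner_single_right, one_mul, conj_trivial]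
    module
  have hcross : ∀ y : E3, y 2 • EuclideanSpace.single 0 1 - y 0 • EuclideanSpace.single 2 1
      = -cross3 y (EuclideanSpace.single 1 1) := fun y => by
    ext i
    fin_cases i <;> simp [cross3]
  exact ⟨hres, hcross,
    fun x hx => V_eq_of_sub_eq_neg_cross3 _ (fun y => (hres y).trans (hcross y)) hx⟩
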